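/- arXiv:0910.0863 — 9 statements merged into one kernel-verified Lean document; each statement's English description precedes it below -/
import Mathlib

section
/- Let $G$ be a group, $A$ a set, $H \leq G$, and $\tau \colon A^G \to A^G$ a cellular automaton with memory set contained in $H$. Then $\tau$ is bijective if and only if its restriction $\tau_H \colon A^H \to A^H$ is bijective. -/
/-- A cellular automaton `τ` over `G` with memory set `M` contained in a
subgroup `H` is bijective if and only if its restriction `τ_H` to `H`
is bijective. -/
theorem bijective_iff_restriction_bijective {G A : Type*} [Group G] (H : Subgroup G)
    (τ : (G → A) → (G → A)) (M : Finset H) (μ : (M → A) → A)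
    (hτ : ∀ (x : G → A) (g : G), τ x g = μ (fun m => x (g * ((m.val : H) : G))))
    (τH : (H → A) → (H → A))
    (hτH : ∀ (y : H → A) (h : H), τH y h = μ (fun m => y (h * m.val))) :
    Function.Bijective τ ↔ Function.Bijective τH := by
  classical
  have mem : ∀ g : G, (Quotient.out (QuotientGroup.mk (s := H) g))⁻¹ * g ∈ H := by
    intro g
    rw [← QuotientGroup.eq]
    exact QuotientGroup.out_eq' _
  let e : (G → A) ≃ ((G ⧸ H) → H → A) :=
    { toFun := fun x q h => x (Quotient.out q * h)
      invFun := fun y g => y (QuotientGroup.mk g) ⟨_, mem g⟩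
      left_inv := by
        intro x; funext g
        simp only
        congr 1
        rw [mul_inv_cancel_left]
      right_inv := by
        intro y; funext q h
        simp only
        have hq : (QuotientGroup.mk (Quotient.out q * (h : G)) : G ⧸ H) = q := by
          rw [QuotientGroup.mk_mul_of_mem _ h.2, QuotientGroup.out_eq']
        have he : (⟨(Quotient.out (QuotientGroup.mk (Quotient.out q * (h : G))))⁻¹ *
            (Quotient.out q * (h : G)), mem _⟩ : H) = h := by
          apply Subtype.ext
          show (Quotient.out (QuotientGroup.mk (Quotient.out q * (h : G))))⁻¹ *
            (Quotient.out q * (h : G)) = (h : G)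
          rw [hq]
          exact inv_mul_cancel_left _ _
        rw [he, hq] }
  set F : ((G ⧸ H) → H → A) → ((G ⧸ H) → H → A) := fun y q => τH (y q) with hF
  have conj : ∀ x, e (τ x) = F (e x) := by
    intro x
    funext q h
    show τ x (Quotient.out q * h) = τH (fun h' => x (Quotient.out q * h')) h
    rw [hτ, hτH]
    congr 1
    funext m
    simp [mul_assoc]
  have hτeq : τ = e.symm ∘ F ∘ e := by
    funext x
    show τ x = e.symm (F (e x))
    exact (Equiv.eq_symm_apply e).mpr (conj x)
  have hQ : Nonempty (G ⧸ H) := ⟨QuotientGroup.mk 1⟩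
  obtain ⟨q0⟩ := hQ
  constructor
  · intro hb
    rw [hτeq] at hb
    have hFb : Function.Bijective F := by
      have := (Equiv.comp_bijective (F ∘ e) e.symm).mp hb
      exact (Equiv.bijective_comp e F).mp this
    constructor
    · intro a b hab
      have : F (fun _ => a) = F (fun _ => b) := by
        funext q; simp [hF, hab]
      have := hFb.1 this
      exact congrFun this q0
    · intro b
      obtain ⟨y, hy⟩ := hFb.2 (fun _ => b)
      exact ⟨y q0, congrFun hy q0⟩
  · intro hb
    have hFb : Function.Bijective F := by
      constructor
      · intro a b hab
        funext q
        exact hb.1 (congrFun hab q)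
      · intro y
        refine ⟨fun q => Classical.choose (hb.2 (y q)), ?_⟩
        funext q
        exact Classical.choose_spec (hb.2 (y q))
    rw [hτeq]
    exact e.symm.bijective.comp (hFb.comp e.bijective)
end

section
/- Let $G$ be a group, $A$ a set, $H \leq G$, and $\tau \colon A^G \to A^G$ a cellular automaton with memory set contained in $H$. Then $\tau(A^G)$ is closed in $A^G$ (prodiscrete topology) if and only if $\tau_H(A^H)$ is closed in $A^H$ (prodiscrete topology). -/
/-!
Choosing a representative of each left coset of `H` writes every `g : G` uniquely as `q.out * h`,
which identifies `A^G` homeomorphically with `(A^H)^(G ⧸ H)`. Since the memory set lies in `H`,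
under this identification `τ` acts as `τ_H` on every coset separately, so `τ(A^G)` becomes the
product `∏_{G ⧸ H} τ_H(A^H)`; and a product of copies of one set over a nonempty index set is
closed iff that set is closed.
-/

/-- The prodiscrete topology on `G → A`: product of discrete topologies. -/
def prodiscrete (G A : Type*) : TopologicalSpace (G → A) :=
  @Pi.topologicalSpace G (fun _ => A) (fun _ => ⊥)

open Set Function

theorem isClosed_univ_pi_const_iff {ι X : Type*} [TopologicalSpace X] [Nonempty ι] {S : Set X} :
    IsClosed (univ.pi fun _ : ι => S) ↔ IsClosed S := by
  refine ⟨fun h => ?_, fun h => isClosed_set_pi fun _ _ => h⟩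
  have hS : S = (fun x (_ : ι) => x) ⁻¹' univ.pi fun _ => S := by
    ext x
    simp
  rw [hS]
  exact h.preimage (continuous_pi fun _ => continuous_id)

theorem isClosed_range_piMap_const_iff {ι X Y : Type*} [TopologicalSpace Y] [Nonempty ι]
    (f : X → Y) : IsClosed (range (Pi.map fun _ : ι => f)) ↔ IsClosed (range f) := by
  rw [range_piMap, isClosed_univ_pi_const_iff]

theorem Homeomorph.isClosed_range_iff_of_semiconj {X Y : Type*} [TopologicalSpace X]
    [TopologicalSpace Y] (e : X ≃ₜ Y) {f : X → X} {g : Y → Y} (h : Semiconj e f g) :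
    IsClosed (range f) ↔ IsClosed (range g) := by
  rw [← e.surjective.range_comp g, ← h.comp_eq, range_comp, e.isClosed_image]

namespace Subgroup

variable {G : Type*} [Group G] (H : Subgroup G)

noncomputable def quotientProdEquiv : (G ⧸ H) × H ≃ G where
  toFun p := p.1.out * p.2
  invFun g := ((g : G ⧸ H), ⟨(g : G ⧸ H).out⁻¹ * g, QuotientGroup.eq.mp (QuotientGroup.out_eq' _)⟩)
  left_inv := by
    rintro ⟨q, h⟩
    have hq : ((q.out * h : G) : G ⧸ H) = q := by
      rw [QuotientGroup.mk_mul_of_mem _ h.2, QuotientGroup.out_eq']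
    ext
    · exact hq
    · simp [hq]
  right_inv g := by simp

noncomputable def cosetPiHomeomorph (X : Type*) [TopologicalSpace X] :
    (G → X) ≃ₜ (G ⧸ H → H → X) :=
  (Homeomorph.piCongrLeft H.quotientProdEquiv).symm.trans Homeomorph.piCurry

theorem cosetPiHomeomorph_apply {X : Type*} [TopologicalSpace X] (x : G → X) (q : G ⧸ H) (h : H) :
    H.cosetPiHomeomorph X x q h = x (q.out * h) :=
  rfl

end Subgroup

/-- A cellular automaton `τ` over `G` with memory set contained in a subgroup
`H` has closed image in `A^G` iff its restriction `τ_H` has closed image in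
`A^H` (prodiscrete topologies). -/
theorem closed_image_iff_restriction_closed_image {G A : Type*} [Group G] (H : Subgroup G)
    (τ : (G → A) → (G → A)) (M : Finset H) (μ : (M → A) → A)
    (hτ : ∀ (x : G → A) (g : G), τ x g = μ (fun m => x (g * ((m.val : H) : G))))
    (τH : (H → A) → (H → A))
    (hτH : ∀ (y : H → A) (h : H), τH y h = μ (fun m => y (h * m.val))) :
    @IsClosed _ (prodiscrete G A) (Set.range τ) ↔
      @IsClosed _ (prodiscrete H A) (Set.range τH) := by
  let _ : TopologicalSpace A := ⊥
  change IsClosed (range τ) ↔ IsClosed (range τH)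
  have hsemiconj : Semiconj (H.cosetPiHomeomorph A) τ (Pi.map fun _ => τH) := by
    intro x
    funext q h
    simp only [Pi.map_apply, Subgroup.cosetPiHomeomorph_apply, hτ, hτH, Subgroup.coe_mul, mul_assoc]
  rw [(H.cosetPiHomeomorph A).isClosed_range_iff_of_semiconj hsemiconj,
    isClosed_range_piMap_const_iff]
end

section
/- Let $G$ be a countable group and $V$ a finite-dimensional vector space over a field $\mathbb{K}$. Every bijective linear cellular automaton $\tau \colon V^G \to V^G$ is reversible, i.e., $\tau^{-1}$ is also a cellular automaton. -/
/-!
For a finite window `S ⊆ G`, the restrictions to `S` of the configurations `y` with `τ y`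
vanishing on a finite set `T` form a family of subspaces of the finite-dimensional space `V^S`
that decreases in `T`, so it stabilises (a Mittag-Leffler condition). Stabilised restrictions can
therefore be lifted along an exhaustion of the countable group `G` and glued into a global
configuration. If `y 1` were not determined by `τ y` on some finite set, this would produce a
nonzero element of the kernel of `τ`. Hence `τ⁻¹ x 1` depends only on finitely many coordinates
of `x`, and `τ⁻¹`, being equivariant like `τ`, is a cellular automaton.
-/

/-- `τ` is a cellular automaton over the group `G` and alphabet `A`:
there are a finite memory set `M ⊆ G` and a local defining map
`μ : A^M → A` with `τ(x)(g) = μ((g⁻¹ · x)|_M)`; note `(g⁻¹ · x)(m) = x (g * m)`. -/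
def IsCellularAutomaton {G A : Type*} [Group G] (τ : (G → A) → (G → A)) : Prop :=
  ∃ (M : Finset G) (μ : (M → A) → A),
    ∀ (x : G → A) (g : G), τ x g = μ (fun m => x (g * m.val))

open Function Set Filter

theorem exists_eqOn_of_eqOn_succ {I α : Type*} {S : ℕ → Set I} (hS : Monotone S)
    (hcover : ∀ i, ∃ k, i ∈ S k) (ys : ℕ → I → α)
    (hys : ∀ k, EqOn (ys (k + 1)) (ys k) (S k)) :
    ∃ y : I → α, ∀ k, EqOn y (ys k) (S k) := by
  have hcoh : ∀ k l, k ≤ l → EqOn (ys l) (ys k) (S k) := by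
    intro k l hkl
    induction l, hkl using Nat.le_induction with
    | base => exact fun _ _ => rfl
    | succ l hkl ih => exact fun i hi => (hys l (hS hkl hi)).trans (ih hi)
  choose κ hκ using hcover
  refine ⟨fun i => ys (κ i) i, fun k i hi => ?_⟩
  calc ys (κ i) i = ys (max (κ i) k) i := (hcoh _ _ (le_max_left _ _) (hκ i)).symm
    _ = ys k i := hcoh _ _ (le_max_right _ _) hi

theorem exists_forall_of_forall_exists {I α : Type*} [Countable I]
    {P : Finset I → (I → α) → Prop}
    (mono : ∀ ⦃S S' : Finset I⦄ ⦃y⦄, S ⊆ S' → P S' y → P S y)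
    (congr : ∀ ⦃S : Finset I⦄ ⦃y y'⦄, EqOn y y' S → P S y → P S y')
    (lift : ∀ ⦃S y⦄ (S' : Finset I), P S y → ∃ y', P S' y' ∧ EqOn y' y S)
    {S₀ : Finset I} {y₀ : I → α} (h₀ : P S₀ y₀) :
    ∃ y, (∀ S, P S y) ∧ EqOn y y₀ S₀ := by
  classical
  obtain ⟨u, hu, hlim⟩ := exists_seq_monotone_tendsto_atTop_atTop (Finset I)
  let S : ℕ → Finset I := fun k => S₀ ∪ u k
  have hcofinal (T : Finset I) : ∃ k, T ⊆ S k :=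
    ((tendsto_atTop.1 hlim T).exists).imp fun _ hk => hk.trans Finset.subset_union_right
  have hstep (k : ℕ) (y : {y // P (S k) y}) :
      ∃ y' : {y' // P (S (k + 1)) y'}, EqOn y'.1 y.1 (S k) :=
    let ⟨y', hy', hy'y⟩ := lift (S (k + 1)) y.2
    ⟨⟨y', hy'⟩, hy'y⟩
  choose next hnext using hstep
  obtain ⟨z₀, hz₀, hz₀y₀⟩ := lift (S 0) h₀
  let ys : ∀ k, {y // P (S k) y} := fun k => Nat.rec ⟨z₀, hz₀⟩ next k
  obtain ⟨y, hy⟩ := exists_eqOn_of_eqOn_succ (S := fun k => (S k : Set I))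
    (fun _ _ hkl => Finset.coe_subset.2 (Finset.union_subset_union_right (hu hkl)))
    (fun i => (hcofinal {i}).imp fun _ hk => hk (Finset.mem_singleton_self i))
    (fun k => (ys k).1) (fun k => hnext k (ys k))
  refine ⟨y, fun T => ?_, ((hy 0).mono Finset.subset_union_left).trans hz₀y₀⟩
  obtain ⟨k, hk⟩ := hcofinal T
  exact mono hk (congr (hy k).symm (ys k).2)

section LocallyFiniteLinearMap

variable {I J K V : Type*} [Ring K] [AddCommGroup V] [Module K V]
  (τ : (I → V) →ₗ[K] (J → V))

def vanishingSubmodule (T : Finset J) : Submodule K (I → V) :=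
  LinearMap.ker (LinearMap.funLeft K V ((↑) : T → J) ∘ₗ τ)

variable {τ} in
theorem mem_vanishingSubmodule {T : Finset J} {y : I → V} :
    y ∈ vanishingSubmodule τ T ↔ ∀ j ∈ T, τ y j = 0 := by
  simp [vanishingSubmodule, funext_iff]

theorem vanishingSubmodule_anti : Antitone (vanishingSubmodule τ) :=
  fun _ _ hTT' _ hy => mem_vanishingSubmodule.2 fun j hj => mem_vanishingSubmodule.1 hy j (hTT' hj)

def IsExtendable (S : Finset I) (y : I → V) : Prop :=
  ∀ T : Finset J, ∃ z ∈ vanishingSubmodule τ T, EqOn z y S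

theorem exists_forall_mem_vanishingSubmodule_isExtendable [IsArtinian K V] (S : Finset I) :
    ∃ T₀ : Finset J, ∀ y ∈ vanishingSubmodule τ T₀, IsExtendable τ S y := by
  classical
  let W : Finset J → Submodule K (S → V) := fun T =>
    (vanishingSubmodule τ T).map (LinearMap.funLeft K V ((↑) : S → I))
  have hW : Antitone W := fun _ _ hTT' => Submodule.map_mono (vanishingSubmodule_anti τ hTT')
  obtain ⟨_, ⟨T₀, rfl⟩, hmin⟩ := IsArtinian.set_has_minimal (range W) (range_nonempty W)
  refine ⟨T₀, fun y hy T => ?_⟩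
  have hle : W T₀ ≤ W T := by
    have heq : W (T₀ ∪ T) = W T₀ :=
      (hW Finset.subset_union_left).eq_of_not_lt (hmin _ ⟨_, rfl⟩)
    exact heq ▸ hW Finset.subset_union_right
  obtain ⟨z, hz, hzy⟩ := hle (Submodule.mem_map_of_mem hy)
  exact ⟨z, hz, fun i hi => congr_fun hzy ⟨i, hi⟩⟩

theorem IsExtendable.exists_isExtendable [IsArtinian K V] {S : Finset I} {y : I → V}
    (h : IsExtendable τ S y) (S' : Finset I) : ∃ y', IsExtendable τ S' y' ∧ EqOn y' y S := by
  obtain ⟨T₀, hT₀⟩ := exists_forall_mem_vanishingSubmodule_isExtendable τ S'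
  obtain ⟨z, hz, hzy⟩ := h T₀
  exact ⟨z, hT₀ z hz, hzy⟩

variable [IsArtinian K V] [Countable I]
  (hloc : ∀ j, ∃ D : Finset I, ∀ x x', EqOn x x' D → τ x j = τ x' j)
include hloc

theorem exists_finset_forall_mem_vanishingSubmodule_eq_zero (hinj : Injective τ) (i₀ : I) :
    ∃ F : Finset J, ∀ y ∈ vanishingSubmodule τ F, y i₀ = 0 := by
  by_contra! h
  obtain ⟨T₀, hT₀⟩ := exists_forall_mem_vanishingSubmodule_isExtendable τ {i₀}
  obtain ⟨y₀, hy₀, hy₀i₀⟩ := h T₀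
  obtain ⟨y, hy, hyy₀⟩ := exists_forall_of_forall_exists (P := IsExtendable τ)
    (fun _ _ _ hSS' h T => (h T).imp fun _ ⟨hz, hzy⟩ => ⟨hz, hzy.mono hSS'⟩)
    (fun _ _ _ hyy' h T => (h T).imp fun _ ⟨hz, hzy⟩ => ⟨hz, hzy.trans hyy'⟩)
    (fun _ _ S' h => h.exists_isExtendable τ S') (hT₀ y₀ hy₀)
  have hτy : τ y = 0 := funext fun j => by
    obtain ⟨D, hD⟩ := hloc j
    obtain ⟨z, hz, hzy⟩ := hy D {j}
    rw [← hD z y hzy]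
    exact mem_vanishingSubmodule.1 hz j (Finset.mem_singleton_self j)
  have hzero : y = 0 := hinj (hτy.trans (map_zero τ).symm)
  exact hy₀i₀ (by simpa [hzero] using (hyy₀ (Finset.mem_singleton_self i₀)).symm)

theorem exists_finset_forall_eqOn_apply_eq (hinj : Injective τ) (i₀ : I) :
    ∃ F : Finset J, ∀ y y', EqOn (τ y) (τ y') F → y i₀ = y' i₀ := by
  obtain ⟨F, hF⟩ := exists_finset_forall_mem_vanishingSubmodule_eq_zero τ hloc hinj i₀
  refine ⟨F, fun y y' h => sub_eq_zero.1 <|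
    hF (y - y') (mem_vanishingSubmodule.2 fun j hj => ?_)⟩
  simp [h hj]

end LocallyFiniteLinearMap

section CellularAutomaton

variable {G A : Type*} [Group G] {τ σ : (G → A) → (G → A)}

theorem IsCellularAutomaton.exists_finset_eqOn (hτ : IsCellularAutomaton τ) (g : G) :
    ∃ D : Finset G, ∀ x x', EqOn x x' D → τ x g = τ x' g := by
  classical
  obtain ⟨M, μ, hμ⟩ := hτ
  refine ⟨M.image (g * ·), fun x x' h => ?_⟩
  rw [hμ, hμ]
  congr 1
  exact funext fun m => h (Finset.mem_image_of_mem _ m.2)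

theorem IsCellularAutomaton.map_translate (hτ : IsCellularAutomaton τ) (x : G → A) (g : G) :
    τ (fun h => x (g * h)) = fun h => τ x (g * h) := by
  obtain ⟨M, μ, hμ⟩ := hτ
  funext h
  simp only [hμ, mul_assoc]

theorem IsCellularAutomaton.inverse_map_translate (hτ : IsCellularAutomaton τ)
    (hl : LeftInverse σ τ) (hr : RightInverse σ τ) (x : G → A) (g : G) :
    σ (fun h => x (g * h)) = fun h => σ x (g * h) := by
  have h := hτ.map_translate (σ x) g
  rw [hr x] at h
  rw [← h, hl]

theorem isCellularAutomaton_of_map_translate [Nonempty A] (F : Finset G)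
    (hσ : ∀ x g, σ (fun h => x (g * h)) = fun h => σ x (g * h))
    (hloc : ∀ x x', EqOn x x' F → σ x 1 = σ x' 1) : IsCellularAutomaton σ := by
  refine ⟨F, fun v => σ (extend Subtype.val v fun _ => Classical.arbitrary A) 1, fun x g => ?_⟩
  rw [← mul_one g, ← congr_fun (hσ x g) 1, mul_one]
  exact hloc _ _ fun h hh =>
    (Subtype.val_injective.extend_apply (fun m : F => x (g * m)) _ ⟨h, hh⟩).symm

end CellularAutomaton

theorem bijective_linear_ca_reversible_countable
    {G : Type*} [Group G] [Countable G] {K V : Type*} [Field K]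
    [AddCommGroup V] [Module K V] [FiniteDimensional K V]
    (τ : (G → V) → (G → V)) (hlin : IsLinearMap K τ)
    (hca : IsCellularAutomaton τ) (hbij : Function.Bijective τ) :
    ∃ σ : (G → V) → (G → V), Function.LeftInverse σ τ ∧
      Function.RightInverse σ τ ∧ IsCellularAutomaton σ := by
  obtain ⟨F, hF⟩ :=
    exists_finset_forall_eqOn_apply_eq (hlin.mk' τ) hca.exists_finset_eqOn hbij.1 1
  have hl := leftInverse_surjInv hbij
  have hr := rightInverse_surjInv hbij.2
  refine ⟨surjInv hbij.2, hl, hr, isCellularAutomaton_of_map_translate F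
    (hca.inverse_map_translate hl hr) fun x x' h => hF _ _ ?_⟩
  change EqOn (τ (surjInv hbij.2 x)) (τ (surjInv hbij.2 x')) F
  rwa [hr x, hr x']
end

section
/- Let $G$ be an arbitrary group and $V$ a finite-dimensional vector space over a field $\mathbb{K}$. Every bijective linear cellular automaton $\tau \colon V^G \to V^G$ is reversible. -/
section FinitaryDuality

open Module

variable {K V W ι κ : Type*} [Field K] [AddCommGroup V] [Module K V] [AddCommGroup W] [Module K W]

noncomputable def finsuppDualPairing : (ι →₀ Dual K V) →ₗ[K] Dual K (ι → V) :=
  Finsupp.lsum K fun i => (LinearMap.proj (R := K) (φ := fun _ : ι => V) i).dualMap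

theorem finsuppDualPairing_apply (φ : ι →₀ Dual K V) (x : ι → V) :
    finsuppDualPairing φ x = φ.sum fun i f => f (x i) := by
  simp [finsuppDualPairing, Finsupp.sum]

theorem finsuppDualPairing_single (i : ι) (f : Dual K V) (x : ι → V) :
    finsuppDualPairing (Finsupp.single i f) x = f (x i) := by
  simp [finsuppDualPairing]

theorem finsuppDualPairing_eq_zero {φ : ι →₀ Dual K V} {x : ι → V}
    (hx : ∀ i ∈ φ.support, x i = 0) : finsuppDualPairing φ x = 0 := by
  rw [finsuppDualPairing_apply]
  exact Finset.sum_eq_zero fun i hi => by simp [hx i hi]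

theorem exists_finsuppDualPairing_eq [FiniteDimensional K V]
    (Λ : Dual K (ι →₀ Dual K V)) : ∃ x : ι → V, ∀ φ, Λ φ = finsuppDualPairing φ x := by
  let x i := (evalEquiv K V).symm (Λ ∘ₗ Finsupp.lsingle i)
  refine ⟨x, fun φ => ?_⟩
  have hΛ : Λ = Dual.eval K _ x ∘ₗ finsuppDualPairing :=
    Finsupp.lhom_ext' fun i => LinearMap.ext fun f => by simp [x, finsuppDualPairing_single]
  exact LinearMap.congr_fun hΛ φ

theorem exists_finsuppDualPairing_eq_of_local {N : Finset ι} {ℓ : Dual K (ι → V)}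
    (hℓ : ∀ x : ι → V, (∀ i ∈ N, x i = 0) → ℓ x = 0) :
    ∃ φ : ι →₀ Dual K V, finsuppDualPairing φ = ℓ := by
  classical
  refine ⟨∑ n ∈ N, Finsupp.single n (ℓ ∘ₗ LinearMap.single K (fun _ => V) n),
    LinearMap.ext fun x => ?_⟩
  simp only [map_sum, LinearMap.coe_sum, Finset.sum_apply, finsuppDualPairing_single,
    LinearMap.comp_apply]
  rw [← map_sum, eq_comm, ← sub_eq_zero, ← map_sub]
  refine hℓ _ fun i hi => ?_
  simp [Finset.sum_pi_single, hi]

theorem exists_finsuppDualPairing_comp_eq [FiniteDimensional K V]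
    (T : (ι → V) →ₗ[K] (κ → W)) (hT : Function.Injective T)
    (hloc : ∀ k, ∃ N : Finset ι, ∀ x, (∀ i ∈ N, x i = 0) → T x k = 0)
    (φ : ι →₀ Dual K V) :
    ∃ ψ : κ →₀ Dual K W, finsuppDualPairing ψ ∘ₗ T = finsuppDualPairing φ := by
  by_contra! hφ
  obtain ⟨Λ, hΛφ, hΛ⟩ := Submodule.exists_dual_map_eq_bot_of_notMem
    (p := (LinearMap.range (T.dualMap ∘ₗ finsuppDualPairing)).comap finsuppDualPairing)
    (x := φ) (fun ⟨ψ, hψ⟩ => hφ ψ hψ) inferInstance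
  obtain ⟨x, hx⟩ := exists_finsuppDualPairing_eq Λ
  have hTx : T x = 0 := funext fun k => (forall_dual_apply_eq_zero_iff K _).1 fun f => by
    obtain ⟨N, hN⟩ := hloc k
    obtain ⟨φ', hφ'⟩ := exists_finsuppDualPairing_eq_of_local (N := N)
      (ℓ := f ∘ₗ LinearMap.proj k ∘ₗ T) fun x hx => by simp [hN x hx]
    have hφ'Λ : Λ φ' = 0 := by
      refine LinearMap.le_ker_iff_map.2 hΛ ⟨Finsupp.single k f, ?_⟩
      ext y
      simp [finsuppDualPairing_single, hφ']
    rw [hx, hφ'] at hφ'Λ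
    simpa using hφ'Λ
  have hx0 : x = 0 := hT (hTx.trans (map_zero T).symm)
  exact hΛφ (by simp [hx, hx0])

theorem exists_finset_forall_apply_eq_zero_of_injective [FiniteDimensional K V]
    (T : (ι → V) →ₗ[K] (κ → W)) (hT : Function.Injective T)
    (hloc : ∀ k, ∃ N : Finset ι, ∀ x, (∀ i ∈ N, x i = 0) → T x k = 0) (i : ι) :
    ∃ F : Finset κ, ∀ x, (∀ k ∈ F, T x k = 0) → x i = 0 := by
  classical
  let b := finBasis K V
  choose ψ hψ using fun j => exists_finsuppDualPairing_comp_eq T hT hloc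
    (Finsupp.single i (b.coord j))
  refine ⟨Finset.univ.biUnion fun j => (ψ j).support, fun x hx => b.forall_coord_eq_zero_iff.1
    fun j => ?_⟩
  rw [← finsuppDualPairing_single, ← hψ j, LinearMap.comp_apply]
  exact finsuppDualPairing_eq_zero fun k hk =>
    hx k (Finset.mem_biUnion.2 ⟨j, Finset.mem_univ _, hk⟩)

end FinitaryDuality

namespace IsCellularAutomaton

variable {G A : Type*} [Group G] {τ : (G → A) → (G → A)}

theorem apply_mul (hτ : IsCellularAutomaton τ) (h : G) (x : G → A) :
    τ (fun g => x (h * g)) = fun g => τ x (h * g) := by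
  obtain ⟨M, μ, hμ⟩ := hτ
  funext g
  simp only [hμ, mul_assoc]

theorem exists_finset_forall_apply_eq_zero [Zero A] (hτ : IsCellularAutomaton τ) (hτ0 : τ 0 = 0)
    (g : G) : ∃ N : Finset G, ∀ x, (∀ n ∈ N, x n = 0) → τ x g = 0 := by
  classical
  obtain ⟨M, μ, hμ⟩ := hτ
  refine ⟨M.image (g * ·), fun x hx => ?_⟩
  have hx' : (fun m : M => x (g * m)) = fun m : M => (0 : G → A) (g * m) :=
    funext fun m => hx _ (Finset.mem_image_of_mem _ m.2)
  rw [hμ, hx', ← hμ, hτ0, Pi.zero_apply]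

theorem apply_mul_of_rightInverse {σ : (G → A) → (G → A)} (hτ : IsCellularAutomaton τ)
    (hinj : Function.Injective τ) (hσ : Function.RightInverse σ τ) (h : G) (y : G → A) :
    σ (fun g => y (h * g)) = fun g => σ y (h * g) :=
  hinj <| by rw [hσ, hτ.apply_mul, hσ]

theorem of_apply_one [Nonempty A] (hτ : ∀ h x, τ (fun g => x (h * g)) = fun g => τ x (h * g))
    (N : Finset G) (hN : ∀ x y, (∀ n ∈ N, x n = y n) → τ x 1 = τ y 1) :
    IsCellularAutomaton τ := by
  classical
  refine ⟨N, fun u => τ (fun g => if hg : g ∈ N then u ⟨g, hg⟩ else Classical.arbitrary A) 1,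
    fun x g => ?_⟩
  have hx := congrFun (hτ g x) 1
  rw [mul_one] at hx
  rw [← hx]
  exact hN _ _ fun n hn => by simp [hn]

end IsCellularAutomaton

theorem bijective_linear_ca_reversible
    {G : Type*} [Group G] {K V : Type*} [Field K]
    [AddCommGroup V] [Module K V] [FiniteDimensional K V]
    (τ : (G → V) → (G → V)) (hlin : IsLinearMap K τ)
    (hca : IsCellularAutomaton τ) (hbij : Function.Bijective τ) :
    ∃ σ : (G → V) → (G → V), Function.LeftInverse σ τ ∧
      Function.RightInverse σ τ ∧ IsCellularAutomaton σ := by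
  let T := LinearEquiv.ofBijective (hlin.mk' τ) hbij
  obtain ⟨N, hN⟩ := exists_finset_forall_apply_eq_zero_of_injective T.toLinearMap T.injective
    (hca.exists_finset_forall_apply_eq_zero (map_zero T)) 1
  refine ⟨T.symm, T.symm_apply_apply, T.apply_symm_apply,
    .of_apply_one (hca.apply_mul_of_rightInverse T.injective T.apply_symm_apply) N
      fun y₁ y₂ hy => sub_eq_zero.1 (hN (T.symm y₁ - T.symm y₂) fun n hn => ?_)⟩
  simp [hy n hn]
end

section
/- Let $G$ be any group and $V$ a finite-dimensional vector space over a field $\mathbb{K}$. Every linear cellular automaton $\tau \colon V^G \to V^G$ has closed image in $V^G$ for the prodiscrete topology. -/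
/-!
Let `M` be a memory set of `τ` and `H` the subgroup generated by `M`. The values of `τ x` on a
left coset `g₀H` only depend on `x` restricted to `g₀H`, so it suffices to solve `τ x = y` on
each coset separately. A coset is countable; enumerating it as `c 0, c 1, …`, the configurations
solving `τ x = y` at `c 0, …, c (n-1)` form a decreasing sequence of nonempty affine subspaces
`A n`. Their projections to the finite-dimensional spaces `V ^ {c 0, …, c (k-1)}` stabilise by
a dimension count (Mittag-Leffler), which lets us build a compatible sequence of partial
solutions whose limit lies in every `A n`.
-/

open Module Function

theorem AffineSubspace.exists_forall_le_of_antitone {K E : Type*} [Field K] [AddCommGroup E]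
    [Module K E] [FiniteDimensional K E] {s : ℕ → AffineSubspace K E} (hs : Antitone s)
    (hne : ∀ n, (s n : Set E).Nonempty) : ∃ N, ∀ n, s N ≤ s n := by
  set N := argmin fun n => finrank K (s n).direction
  refine ⟨N, fun n => (le_total n N).elim (fun h => hs h) fun h => ?_⟩
  have hdir : (s n).direction = (s N).direction :=
    Submodule.eq_of_le_of_finrank_le (AffineSubspace.direction_le (hs h))
      (argmin_le (fun n => finrank K (s n).direction) n)
  exact (AffineSubspace.eq_of_direction_eq_of_nonempty_of_le hdir (hne n) (hs h)).ge

theorem exists_forall_mem_exists_lt_eq {ι : Type*} (c : ℕ → ι) (s : Finset ι)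
    (hs : (s : Set ι) ⊆ Set.range c) : ∃ k, ∀ i ∈ s, ∃ j < k, c j = i := by
  have hpre : ∀ i ∈ s, ∃ j, c j = i := fun i hi => hs hi
  choose! d hd using hpre
  exact ⟨s.sup d + 1, fun i hi => ⟨d i, Nat.lt_succ_of_le (Finset.le_sup hi), hd i hi⟩⟩

theorem exists_forall_lt_eq_of_forall_lt_succ_eq {ι β : Type*} (c : ℕ → ι) (a : ℕ → ι → β)
    (h : ∀ k, ∀ j < k, a (k + 1) (c j) = a k (c j)) :
    ∃ x : ι → β, ∀ k, ∀ j < k, x (c j) = a k (c j) := by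
  have stable : ∀ j m, j < m → a m (c j) = a (j + 1) (c j) := by
    intro j m hm
    induction m, hm using Nat.le_induction with
    | base => rfl
    | succ m hjm ih => rw [h m j hjm, ih]
  classical
  refine ⟨fun i => if hi : ∃ j, c j = i then a (hi.choose + 1) i else a 0 i, fun k j hjk => ?_⟩
  have key : ∀ j', c j' = c j → a (j' + 1) (c j) = a k (c j) := fun j' hj' =>
    calc a (j' + 1) (c j) = a (max k (j' + 1)) (c j) := by
          rw [← hj', stable j' (max k (j' + 1)) (by omega)]
      _ = a k (c j) := by rw [stable j _ (by omega), stable j k hjk]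
  have hi : ∃ j', c j' = c j := ⟨j, rfl⟩
  simpa only [dif_pos hi] using key _ hi.choose_spec

section Window

variable (K : Type*) {ι V : Type*} [Semiring K] [AddCommMonoid V] [Module K V]

def window (c : ℕ → ι) (k : ℕ) : (ι → V) →ₗ[K] Fin k → V :=
  LinearMap.funLeft K V fun j : Fin k => c j

variable {K}

theorem window_eq_window_iff {c : ℕ → ι} {k : ℕ} {x x' : ι → V} :
    window K c k x = window K c k x' ↔ ∀ j < k, x (c j) = x' (c j) := by
  simp [window, funext_iff, Fin.forall_iff]

end Window

/-- `hclosed` says that each `A n` is closed for the topology of pointwise convergence on the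
coordinates `c 0, c 1, …`. -/
theorem exists_forall_mem_of_antitone_of_window {K ι V : Type*} [Field K] [AddCommGroup V]
    [Module K V] [FiniteDimensional K V] (c : ℕ → ι) {A : ℕ → AffineSubspace K (ι → V)}
    (hA : Antitone A) (hne : ∀ n, (A n : Set (ι → V)).Nonempty)
    (hclosed : ∀ n x, (∀ k, window K c k x ∈ (A n).map (window K c k).toAffineMap) → x ∈ A n) :
    ∃ x, ∀ n, x ∈ A n := by
  have hleast : ∀ k, ∃ N, ∀ n,
      (A N).map (window K c k).toAffineMap ≤ (A n).map (window K c k).toAffineMap := fun k =>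
    AffineSubspace.exists_forall_le_of_antitone (fun _ _ h => AffineSubspace.map_mono _ (hA h))
      fun n => by simpa only [AffineSubspace.coe_map] using (hne n).image _
  choose N hN using hleast
  have step : ∀ k (a : A (N k)), ∃ b : A (N (k + 1)),
      window K c k (b : ι → V) = window K c k (a : ι → V) := by
    intro k a
    obtain ⟨b, hb, hba⟩ := AffineSubspace.mem_map.1
      (hN k (N (k + 1)) (AffineSubspace.mem_map.2 ⟨a, a.2, rfl⟩))
    exact ⟨⟨b, hb⟩, hba⟩
  choose next hnext using step
  obtain ⟨a₀, ha₀⟩ := hne (N 0)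
  let seq : ∀ k, A (N k) := fun k => Nat.rec (motive := fun k => A (N k)) ⟨a₀, ha₀⟩ next k
  have hseq : ∀ k, ∀ j < k, (seq (k + 1) : ι → V) (c j) = (seq k : ι → V) (c j) := fun k =>
    window_eq_window_iff.1 (hnext k (seq k))
  obtain ⟨x, hx⟩ := exists_forall_lt_eq_of_forall_lt_succ_eq c (fun k => (seq k : ι → V)) hseq
  refine ⟨x, fun n => hclosed n x fun k => ?_⟩
  rw [window_eq_window_iff.2 (hx k)]
  exact hN k n (AffineSubspace.mem_map.2 ⟨_, (seq k).2, rfl⟩)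

theorem exists_forall_eq_of_mem_closure {ι A : Type*} {S : Set (ι → A)} {y : ι → A}
    (hy : y ∈ @closure _ (prodiscrete ι A) S) (Ω : Finset ι) : ∃ x ∈ S, ∀ i ∈ Ω, x i = y i := by
  let _ : TopologicalSpace A := ⊥
  have _ : DiscreteTopology A := ⟨rfl⟩
  have hopen : IsOpen ((Ω : Set ι).pi fun i => ({y i} : Set A)) :=
    isOpen_set_pi Ω.finite_toSet fun _ _ => isOpen_discrete _
  obtain ⟨x, hxΩ, hxS⟩ := mem_closure_iff.1 hy _ hopen fun i _ => rfl
  exact ⟨x, hxS, hxΩ⟩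

theorem Subgroup.countable_closure {G : Type*} [Group G] {s : Set G} (hs : s.Countable) :
    (Subgroup.closure s : Set G).Countable := by
  have := hs.to_subtype
  rw [FreeGroup.closure_eq_range, MonoidHom.coe_range]
  exact Set.countable_range _

section CellularAutomaton

variable {G A : Type*} [Group G] {τ : (G → A) → G → A} {M : Finset G} {μ : (M → A) → A}

theorem apply_eq_of_forall_mem (hμ : ∀ x g, τ x g = μ fun m => x (g * m)) {x x' : G → A}
    {g : G} (h : ∀ m ∈ M, x (g * m) = x' (g * m)) : τ x g = τ x' g := by
  rw [hμ, hμ]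
  exact congrArg μ (funext fun m => h m m.2)

theorem exists_eq_of_forall_coset (hμ : ∀ x g, τ x g = μ fun m => x (g * m)) (H : Subgroup G)
    (hM : (M : Set G) ⊆ H) {y : G → A} (hy : ∀ g₀, ∃ x, ∀ h ∈ H, τ x (g₀ * h) = y (g₀ * h)) :
    ∃ x, τ x = y := by
  choose X hX using hy
  let rep : G → G := fun g => (g : G ⧸ H).out
  have hrep_mul : ∀ g, ∀ m ∈ M, rep (g * m) = rep g := fun g m hm => by
    simp only [rep, QuotientGroup.eq.2 (by simpa using H.inv_mem (hM hm) : g⁻¹ * (g * m) ∈ H)]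
  refine ⟨fun g => X (rep g) g, funext fun g => ?_⟩
  obtain ⟨h, hg⟩ := QuotientGroup.mk_out_eq_mul H g
  have hsol := hX (rep g) h⁻¹ (H.inv_mem h.2)
  rw [show rep g * (h : G)⁻¹ = g by simp [rep, hg]] at hsol
  rw [← hsol]
  exact apply_eq_of_forall_mem hμ fun m hm => by simp only [hrep_mul g m hm]

end CellularAutomaton

section Solutions

variable {ι K V : Type*} [Field K] [AddCommGroup V] [Module K V]

def affineSolutions (T : (ι → V) →ₗ[K] ι → V) (c : ℕ → ι) (y : ι → V) (n : ℕ) :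
    AffineSubspace K (ι → V) :=
  (affineSpan K {window K c n y}).comap ((window K c n).comp T).toAffineMap

theorem mem_affineSolutions {T : (ι → V) →ₗ[K] ι → V} {c : ℕ → ι} {y x : ι → V} {n : ℕ} :
    x ∈ affineSolutions T c y n ↔ ∀ j < n, T x (c j) = y (c j) := by
  simp [affineSolutions, AffineSubspace.mem_affineSpan_singleton, window_eq_window_iff]

theorem antitone_affineSolutions (T : (ι → V) →ₗ[K] ι → V) (c : ℕ → ι) (y : ι → V) :
    Antitone (affineSolutions T c y) := fun _ _ hmn _ hx =>
  mem_affineSolutions.2 fun j hj => mem_affineSolutions.1 hx j (by omega)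

theorem mem_affineSolutions_of_forall_window {G : Type*} [Group G] {T : (G → V) →ₗ[K] G → V}
    {M : Finset G} {μ : (M → V) → V} (hμ : ∀ x g, T x g = μ fun m => x (g * m)) {c : ℕ → G}
    (hcM : ∀ j, ∀ m ∈ M, ∃ i, c i = c j * m) {y x : G → V} {n : ℕ}
    (hx : ∀ k, window K c k x ∈ (affineSolutions T c y n).map (window K c k).toAffineMap) :
    x ∈ affineSolutions T c y n := by
  classical
  -- `T x (c j)` only reads `x` on `c j * M ⊆ range c`; finitely many such sets fit in a window
  set Ω := (Finset.range n).biUnion fun j => M.image (c j * ·)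
  have hΩ : ∀ g, g ∈ Ω ↔ ∃ j < n, ∃ m ∈ M, c j * m = g := fun g => by
    simp only [Ω, Finset.mem_biUnion, Finset.mem_range, Finset.mem_image]
  obtain ⟨k, hk⟩ := exists_forall_mem_exists_lt_eq c Ω fun g hg => by
    obtain ⟨j, -, m, hm, rfl⟩ := (hΩ g).1 hg
    exact hcM j m hm
  obtain ⟨a, ha, hax⟩ := AffineSubspace.mem_map.1 (hx k)
  refine mem_affineSolutions.2 fun j hj => ?_
  rw [← mem_affineSolutions.1 ha j hj]
  refine apply_eq_of_forall_mem hμ fun m hm => ?_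
  obtain ⟨i, hi, hci⟩ := hk (c j * m) ((hΩ _).2 ⟨j, hj, m, hm, rfl⟩)
  rw [← hci]
  exact (window_eq_window_iff.1 hax i hi).symm

theorem exists_forall_coset_eq_of_approx {G : Type*} [Group G] [FiniteDimensional K V]
    {τ : (G → V) → G → V} (hlin : IsLinearMap K τ) {M : Finset G} {μ : (M → V) → V}
    (hμ : ∀ x g, τ x g = μ fun m => x (g * m)) {y : G → V}
    (happrox : ∀ Ω : Finset G, ∃ x, ∀ g ∈ Ω, τ x g = y g) (g₀ : G) :
    ∃ x, ∀ h ∈ Subgroup.closure (M : Set G), τ x (g₀ * h) = y (g₀ * h) := by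
  classical
  set H := Subgroup.closure (M : Set G)
  have : Countable H := (Subgroup.countable_closure M.countable_toSet).to_subtype
  obtain ⟨e, he⟩ := exists_surjective_nat H
  set c : ℕ → G := fun j => g₀ * e j
  have hcM : ∀ j, ∀ m ∈ M, ∃ i, c i = c j * m := fun j m hm => by
    obtain ⟨i, hi⟩ := he ⟨e j * m, H.mul_mem (e j).2 (Subgroup.subset_closure hm)⟩
    exact ⟨i, by simp [c, hi, mul_assoc]⟩
  set T := IsLinearMap.mk' τ hlin
  have hne : ∀ n, (affineSolutions T c y n : Set (G → V)).Nonempty := fun n => by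
    obtain ⟨x, hx⟩ := happrox ((Finset.range n).image c)
    exact ⟨x, mem_affineSolutions.2 fun j hj =>
      hx _ (Finset.mem_image_of_mem c (Finset.mem_range.2 hj))⟩
  obtain ⟨x, hx⟩ := exists_forall_mem_of_antitone_of_window c (antitone_affineSolutions T c y)
    hne fun n x => mem_affineSolutions_of_forall_window hμ hcM
  refine ⟨x, fun h hh => ?_⟩
  obtain ⟨j, hj⟩ := he ⟨h, hh⟩
  simpa [c, hj, T] using mem_affineSolutions.1 (hx (j + 1)) j j.lt_succ_self

end Solutions

theorem linear_ca_closed_image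
    {G : Type*} [Group G] {K V : Type*} [Field K]
    [AddCommGroup V] [Module K V] [FiniteDimensional K V]
    (τ : (G → V) → (G → V)) (hlin : IsLinearMap K τ)
    (hca : IsCellularAutomaton τ) :
    @IsClosed _ (prodiscrete G V) (Set.range τ) := by
  obtain ⟨M, μ, hμ⟩ := hca
  refine @isClosed_of_closure_subset _ (prodiscrete G V) _ fun y hy => ?_
  have happrox : ∀ Ω : Finset G, ∃ x, ∀ g ∈ Ω, τ x g = y g := fun Ω => by
    obtain ⟨_, ⟨x, rfl⟩, hx⟩ := exists_forall_eq_of_mem_closure hy Ω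
    exact ⟨x, hx⟩
  exact exists_eq_of_forall_coset hμ _ Subgroup.subset_closure
    (exists_forall_coset_eq_of_approx hlin hμ happrox)
end

section
/- Let $G$ be a group containing an element of infinite order and let $A$ be an infinite set. Then there exists a bijective cellular automaton $\tau \colon A^G \to A^G$ which is not reversible. -/
theorem IsCellularAutomaton.conj {G A B : Type*} [Group G] {τ : (G → B) → (G → B)}
    (hτ : IsCellularAutomaton τ) (e : A ≃ B) :
    IsCellularAutomaton fun (x : G → A) g => e.symm (τ (fun h => e (x h)) g) := by
  obtain ⟨M, μ, hμ⟩ := hτ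
  exact ⟨M, fun v => e.symm (μ fun m => e (v m)), fun x g => congrArg e.symm (hμ _ g)⟩

theorem isCellularAutomaton_of_neighbor {G A : Type*} [Group G] [DecidableEq G]
    (f : A → A → A) (h : G) : IsCellularAutomaton fun (x : G → A) g => f (x g) (x (g * h)) :=
  ⟨{1, h}, fun v => f (v ⟨1, by simp⟩) (v ⟨h, by simp⟩), fun x g => by simp only [mul_one]⟩

theorem Function.invFun_equiv_eq_symm {α β : Type*} [Nonempty α] (e : α ≃ β) :
    Function.invFun e = e.symm :=
  (Function.leftInverse_invFun e.injective).eq_rightInverse e.rightInverse_symm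

theorem nonempty_equiv_nat_prod_bool_prod (A : Type*) [Infinite A] :
    Nonempty (A ≃ ℕ × Bool × A) := by
  refine Cardinal.eq.1 ?_
  simp only [Cardinal.mk_prod, Cardinal.mk_nat, Cardinal.mk_bool, Cardinal.lift_uzero,
    Cardinal.lift_aleph0, Cardinal.lift_ofNat]
  rw [← mul_assoc, Cardinal.aleph0_mul_ofNat, Cardinal.aleph0_mul_mk_eq]

namespace DescentXor

variable {G : Type*} [Group G] (g₀ : G) (κ : G → ℕ)

def xorStep (c : G → Bool) (g : G) : Bool :=
  c g ^^ (decide (κ (g * g₀) < κ g) && c (g * g₀))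

def runXor (c : G → Bool) (g : G) : Bool :=
  c g ^^ (if κ (g * g₀) < κ g then runXor c (g * g₀) else false)
termination_by κ g

variable {g₀ κ}

theorem runXor_of_lt (c : G → Bool) {g : G} (h : κ (g * g₀) < κ g) :
    runXor g₀ κ c g = (c g ^^ runXor g₀ κ c (g * g₀)) := by
  rw [runXor, if_pos h]

theorem runXor_of_not_lt (c : G → Bool) {g : G} (h : ¬ κ (g * g₀) < κ g) :
    runXor g₀ κ c g = c g := by
  rw [runXor, if_neg h, Bool.xor_false]

theorem runXor_xorStep (c : G → Bool) : runXor g₀ κ (xorStep g₀ κ c) = c := by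
  funext g
  induction hn : κ g using Nat.strong_induction_on generalizing g with
  | _ n ih =>
    by_cases h : κ (g * g₀) < κ g
    · rw [runXor_of_lt _ h, ih _ (hn ▸ h) _ rfl, xorStep, decide_eq_true h, Bool.true_and,
        Bool.xor_assoc, Bool.xor_self, Bool.xor_false]
    · rw [runXor_of_not_lt _ h, xorStep, decide_eq_false h, Bool.false_and, Bool.xor_false]

theorem xorStep_runXor (c : G → Bool) : xorStep g₀ κ (runXor g₀ κ c) = c := by
  funext g
  by_cases h : κ (g * g₀) < κ g
  · rw [xorStep, decide_eq_true h, Bool.true_and, runXor_of_lt _ h, Bool.xor_assoc,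
      Bool.xor_self, Bool.xor_false]
  · rw [xorStep, decide_eq_false h, Bool.false_and, Bool.xor_false, runXor_of_not_lt _ h]

theorem runXor_const_false : runXor g₀ κ (fun _ => false) = fun _ => false := by
  have h : xorStep g₀ κ (fun _ => false) = fun _ => false :=
    funext fun _ => by simp only [xorStep, Bool.and_false, Bool.xor_false]
  conv_lhs => rw [← h]
  exact runXor_xorStep _

theorem runXor_mul_pow_eq_of_descent (c : G → Bool) (g : G) {n : ℕ}
    (hκ : ∀ i < n, κ (g * g₀ ^ (i + 1)) < κ (g * g₀ ^ i))
    (hc : ∀ i < n, c (g * g₀ ^ i) = false) :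
    runXor g₀ κ c g = runXor g₀ κ c (g * g₀ ^ n) := by
  induction n with
  | zero => rw [pow_zero, mul_one]
  | succ n ih =>
    have hstep := hκ n n.lt_succ_self
    rw [pow_succ, ← mul_assoc] at hstep ⊢
    rw [ih (fun i hi => hκ i (by omega)) (fun i hi => hc i (by omega)), runXor_of_lt _ hstep,
      hc n n.lt_succ_self, Bool.false_xor]


variable (g₀) (B : Type*)

def equiv : (G → ℕ × Bool × B) ≃ (G → ℕ × Bool × B) where
  toFun z g := ((z g).1, xorStep g₀ (fun h => (z h).1) (fun h => (z h).2.1) g, (z g).2.2)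
  invFun z g := ((z g).1, runXor g₀ (fun h => (z h).1) (fun h => (z h).2.1) g, (z g).2.2)
  left_inv z := by
    funext g
    dsimp only
    rw [runXor_xorStep]
  right_inv z := by
    funext g
    dsimp only
    rw [xorStep_runXor]

theorem isCellularAutomaton_equiv : IsCellularAutomaton (equiv g₀ B) := by
  classical
  exact isCellularAutomaton_of_neighbor
    (fun p q => (p.1, p.2.1 ^^ (decide (q.1 < p.1) && q.2.1), p.2.2)) g₀

variable {g₀} in
theorem not_isCellularAutomaton_equiv_symm (hg₀ : ¬ IsOfFinOrder g₀) [Nonempty B] :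
    ¬ IsCellularAutomaton (equiv g₀ B).symm := by
  classical
  rintro ⟨M, μ, hμ⟩
  have hpow : Function.Injective (g₀ ^ · : ℕ → G) := injective_pow_iff_not_isOfFinOrder.2 hg₀
  obtain ⟨-, ⟨N, rfl⟩, hN⟩ := (Set.infinite_range_of_injective hpow).exists_notMem_finset M
  let κ : G → ℕ := fun g => N - Function.invFun (g₀ ^ · : ℕ → G) g
  have hκ (i : ℕ) : κ (g₀ ^ i) = N - i := congrArg (N - ·) (Function.leftInverse_invFun hpow i)
  let c : G → Bool := fun g => decide (g = g₀ ^ N)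
  -- `y (fun _ => false)` and `y c` agree on `M`, but the descending run from `1` reaches `g₀ ^ N`
  let y (bits : G → Bool) : G → ℕ × Bool × B := fun g => (κ g, bits g, Classical.arbitrary B)
  have hwindow : (fun m : M => y (fun _ => false) (1 * m)) = fun m : M => y c (1 * m) := by
    funext m
    simp only [y, c, one_mul, decide_eq_false (ne_of_mem_of_not_mem m.2 hN)]
  have hrun : runXor g₀ κ c 1 = true := by
    rw [runXor_mul_pow_eq_of_descent c 1 (n := N), one_mul, runXor_of_not_lt _ (by simp [hκ])]
    · simp [c]
    · intro i hi; simp only [one_mul, hκ]; omega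
    · intro i hi; simp [c, hpow.ne hi.ne]
  have h := congrArg (fun z => z.2.1)
    ((hμ (y fun _ => false) 1).trans ((congrArg μ hwindow).trans (hμ (y _) 1).symm))
  change runXor g₀ κ (fun _ => false) 1 = runXor g₀ κ c 1 at h
  rw [runXor_const_false, hrun] at h
  exact Bool.false_ne_true h

end DescentXor

theorem exists_bijective_ca_not_reversible
    {G : Type*} [Group G] (g₀ : G) (hg₀ : ¬ IsOfFinOrder g₀)
    {A : Type*} [Infinite A] :
    ∃ τ : (G → A) → (G → A), IsCellularAutomaton τ ∧
      Function.Bijective τ ∧ ¬ IsCellularAutomaton (Function.invFun τ) := by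
  obtain ⟨ψ⟩ := nonempty_equiv_nat_prod_bool_prod A
  let ψG : (G → A) ≃ (G → ℕ × Bool × A) := Equiv.piCongrRight fun _ => ψ
  let τ := (ψG.trans (DescentXor.equiv g₀ A)).trans ψG.symm
  refine ⟨τ, (DescentXor.isCellularAutomaton_equiv g₀ A).conj ψ, τ.bijective, ?_⟩
  rw [Function.invFun_equiv_eq_symm]
  intro hσ
  have hconj : (fun y g => ψ.symm.symm (τ.symm (fun h => ψ.symm (y h)) g)) =
      (DescentXor.equiv g₀ A).symm := by
    funext y g
    show ψ (ψ.symm ((DescentXor.equiv g₀ A).symm (fun h => ψ (ψ.symm (y h))) g)) = _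
    simp only [Equiv.apply_symm_apply]
  exact DescentXor.not_isCellularAutomaton_equiv_symm A hg₀ (hconj ▸ hσ.conj ψ.symm)
end

section
/- Let $G$ be a group containing an element of infinite order and let $V$ be an infinite-dimensional vector space over a field $\mathbb{K}$. Then there exists a linear cellular automaton $\tau' \colon V^G \to V^G$ such that $\tau'(V^G)$ is not closed in $V^G$ for the prodiscrete topology. -/
/-!
Choose a basis `b` of `V`, an injection `σ` of its (infinite) index set with an index `i₀` outside
its range, and let `f` be the endomorphism `b i ↦ b (σ i)`. Take `τ'(x)(g) = x(g g₀) - f(x(g))`.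
The constant configuration `b i₀` is a limit of images: on a finite window, index the cosets of
`⟨g₀⟩ ≅ ℤ` and put the iterates of `v ↦ b i₀ + f v` along them. It is not an image itself: a
preimage `x` would satisfy `b.repr (x (g g₀)) = σ_* (b.repr (x g)) + δ_{i₀}`, so the size of the
support of `b.repr (x g)` would grow by one at each step `g ↦ g g₀`, which no `ℕ`-valued function
on a group can do.
-/

open Function

section Prodiscrete

variable {G A : Type*}

theorem mem_closure_prodiscrete_iff {S : Set (G → A)} {y : G → A} :
    y ∈ @closure _ (prodiscrete G A) S ↔ ∀ I : Finset G, ∃ x ∈ S, ∀ g ∈ I, x g = y g := by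
  let _ : TopologicalSpace A := ⊥
  have : DiscreteTopology A := ⟨rfl⟩
  change y ∈ closure S ↔ _
  rw [mem_closure_iff]
  constructor
  · intro h I
    obtain ⟨x, hxo, hxS⟩ := h {x | ∀ g ∈ I, x g = y g}
      (isOpen_set_pi I.finite_toSet fun _ _ => isOpen_discrete {y _}) fun _ _ => rfl
    exact ⟨x, hxS, hxo⟩
  · intro h o ho hyo
    obtain ⟨I, u, hu, hsub⟩ := isOpen_pi_iff.mp ho y hyo
    obtain ⟨x, hxS, hxy⟩ := h I
    exact ⟨x, hsub fun g hg => (hxy g hg).symm ▸ (hu g hg).2, hxS⟩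

end Prodiscrete

section Group

variable {G : Type*} [Group G]

theorem exists_int_index_mul_eq_add_one {g₀ : G} (hg₀ : ¬IsOfFinOrder g₀) :
    ∃ idx : G → ℤ, ∀ g, idx (g * g₀) = idx g + 1 := by
  let r : G → G := fun g => (QuotientGroup.mk g : G ⧸ Subgroup.zpowers g₀).out
  have hr : ∀ g, r (g * g₀) = r g := fun g => by
    simp only [r, QuotientGroup.mk_mul_of_mem g (Subgroup.mem_zpowers g₀)]
  have hmem : ∀ g, ∃ k : ℤ, g₀ ^ k = (r g)⁻¹ * g := fun g =>
    Subgroup.mem_zpowers_iff.mp (QuotientGroup.leftRel_apply.mp (Quotient.mk_out g))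
  choose idx hidx using hmem
  refine ⟨idx, fun g => injective_zpow_iff_not_isOfFinOrder.mpr hg₀ ?_⟩
  simp only [hidx, zpow_add_one, hr, mul_assoc]

theorem not_forall_apply_mul_eq_add_one (g₀ : G) (s : G → ℕ) :
    ¬∀ g, s (g * g₀) = s g + 1 := by
  intro hs
  have hle : ∀ n g, n ≤ s g := by
    intro n
    induction n with
    | zero => exact fun _ => Nat.zero_le _
    | succ n ih =>
      intro g
      have h := hs (g * g₀⁻¹)
      rw [inv_mul_cancel_right] at h
      exact h ▸ Nat.succ_le_succ (ih _)
  exact Nat.not_succ_le_self _ (hle _ 1)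

end Group

section TwistedDifference

variable {G V : Type*} [Group G]

def twistedDifference [AddGroup V] (f : V → V) (g₀ : G) (x : G → V) : G → V :=
  fun g => x (g * g₀) - f (x g)

theorem isCellularAutomaton_twistedDifference [AddGroup V] (f : V → V) (g₀ : G) :
    IsCellularAutomaton (twistedDifference f g₀) := by
  classical
  exact ⟨{1, g₀}, fun u => u ⟨g₀, by simp⟩ - f (u ⟨1, by simp⟩),
    fun x g => by simp [twistedDifference]⟩

theorem isLinearMap_twistedDifference {R : Type*} [Ring R] [AddCommGroup V] [Module R V]
    (f : V →ₗ[R] V) (g₀ : G) : IsLinearMap R (twistedDifference f g₀) where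
  map_add x y := funext fun g => by
    simp only [twistedDifference, Pi.add_apply, map_add]
    abel
  map_smul c x := funext fun g => by
    simp only [twistedDifference, Pi.smul_apply, map_smul, smul_sub]

theorem exists_twistedDifference_eqOn_const [AddGroup V] {idx : G → ℤ} {g₀ : G}
    (hidx : ∀ g, idx (g * g₀) = idx g + 1) (f : V → V) (a : V) (I : Finset G) :
    ∃ x, ∀ g ∈ I, twistedDifference f g₀ x g = a := by
  obtain ⟨N, hN⟩ := (I.image idx).bddBelow
  refine ⟨fun g => (fun v => a + f v)^[(idx g - N).toNat] 0, fun g hg => ?_⟩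
  have hNg : N ≤ idx g := hN (Finset.mem_image_of_mem idx hg)
  have hsucc : (idx (g * g₀) - N).toNat = (idx g - N).toNat + 1 := by
    rw [hidx]
    omega
  simp only [twistedDifference, hsucc, iterate_succ_apply', add_sub_cancel_right]

theorem const_mem_closure_range_twistedDifference [AddGroup V] {g₀ : G}
    (hg₀ : ¬IsOfFinOrder g₀) (f : V → V) (a : V) :
    (fun _ => a) ∈ @closure _ (prodiscrete G V) (Set.range (twistedDifference f g₀)) := by
  obtain ⟨idx, hidx⟩ := exists_int_index_mul_eq_add_one hg₀
  refine mem_closure_prodiscrete_iff.mpr fun I => ?_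
  obtain ⟨x, hx⟩ := exists_twistedDifference_eqOn_const hidx f a I
  exact ⟨_, ⟨x, rfl⟩, hx⟩

end TwistedDifference

theorem exists_injective_notMem_range (ι : Type*) [Infinite ι] :
    ∃ (σ : ι → ι) (i₀ : ι), Injective σ ∧ i₀ ∉ Set.range σ := by
  obtain ⟨e⟩ : Nonempty (Option ι ≃ ι) := Cardinal.eq.mp <| by
    rw [Cardinal.mk_option, Cardinal.add_one_eq (Cardinal.infinite_iff.mp ‹_›)]
  exact ⟨e ∘ some, e none, e.injective.comp (Option.some_injective ι),
    fun ⟨i, hi⟩ => Option.some_ne_none i (e.injective hi)⟩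

theorem Finsupp.card_support_mapDomain_add_single {ι M : Type*} [AddCommMonoid M]
    {σ : ι → ι} (hσ : Injective σ) {i₀ : ι} (hi₀ : i₀ ∉ Set.range σ) (v : ι →₀ M)
    {a : M} (ha : a ≠ 0) :
    (mapDomain σ v + single i₀ a).support.card = v.support.card + 1 := by
  classical
  have hdisj : Disjoint (mapDomain σ v).support (single i₀ a).support := by
    rw [mapDomain_support_of_injective hσ, support_single i₀ ha,
      Finset.disjoint_singleton_right, Finset.mem_image]
    exact fun ⟨i, _, hi⟩ => hi₀ ⟨i, hi⟩
  rw [support_add_eq hdisj, Finset.card_union_of_disjoint hdisj,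
    mapDomain_support_of_injective hσ, Finset.card_image_of_injective _ hσ,
    support_single i₀ ha, Finset.card_singleton]

theorem Module.Basis.repr_constr_comp {ι R M : Type*} [CommSemiring R] [AddCommMonoid M]
    [Module R M] (b : Basis ι R M) (σ : ι → ι) (v : M) :
    b.repr (b.constr R (b ∘ σ) v) = Finsupp.mapDomain σ (b.repr v) := by
  have : b.repr.toLinearMap ∘ₗ b.constr R (b ∘ σ) =
      Finsupp.lmapDomain R R σ ∘ₗ b.repr.toLinearMap :=
    b.ext fun i => by simp
  exact LinearMap.congr_fun this v

theorem const_notMem_range_twistedDifference {G ι K V : Type*} [Group G] [CommRing K]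
    [Nontrivial K] [AddCommGroup V] [Module K V] (b : Module.Basis ι K V) {σ : ι → ι}
    (hσ : Injective σ) {i₀ : ι} (hi₀ : i₀ ∉ Set.range σ) (g₀ : G) :
    (fun _ => b i₀) ∉ Set.range (twistedDifference (b.constr K (b ∘ σ)) g₀) := by
  rintro ⟨x, hx⟩
  refine not_forall_apply_mul_eq_add_one g₀ (fun g => (b.repr (x g)).support.card) fun g => ?_
  have hstep :
      b.repr (x (g * g₀)) = Finsupp.mapDomain σ (b.repr (x g)) + Finsupp.single i₀ 1 := by
    rw [← b.repr_constr_comp, ← b.repr_self, ← map_add, ← congrFun hx g, twistedDifference,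
      add_sub_cancel]
  simp only [hstep, Finsupp.card_support_mapDomain_add_single hσ hi₀ _ one_ne_zero]

theorem exists_linear_ca_image_not_closed
    {G : Type*} [Group G] (g₀ : G) (hg₀ : ¬ IsOfFinOrder g₀)
    {K V : Type*} [Field K] [AddCommGroup V] [Module K V]
    (hV : ¬ FiniteDimensional K V) :
    ∃ τ' : (G → V) → (G → V), IsLinearMap K τ' ∧ IsCellularAutomaton τ' ∧
      ¬ @IsClosed _ (prodiscrete G V) (Set.range τ') := by
  let b := Module.Basis.ofVectorSpace K V
  have : Infinite (Module.Basis.ofVectorSpaceIndex K V) :=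
    not_finite_iff_infinite.mp fun _ => hV (Module.Finite.of_basis b)
  obtain ⟨σ, i₀, hσ, hi₀⟩ := exists_injective_notMem_range (Module.Basis.ofVectorSpaceIndex K V)
  let f := b.constr K (b ∘ σ)
  refine ⟨twistedDifference f g₀, isLinearMap_twistedDifference f g₀,
    isCellularAutomaton_twistedDifference f g₀, fun hclosed => ?_⟩
  exact const_notMem_range_twistedDifference b hσ hi₀ g₀ <|
    @IsClosed.closure_subset _ (prodiscrete G V) _ hclosed _
      (const_mem_closure_range_twistedDifference hg₀ f (b i₀))
end

section
/- Let $G$ be a locally finite group and $A$ any set. Then every cellular automaton $\tau \colon A^G \to A^G$ has closed image in $A^G$ for the prodiscrete topology. -/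
/-!
The memory set `M` generates a finite subgroup `H`, and `τ x` on a left coset `gH` depends only
on `x` on `gH`. A configuration `x` in the closure of the image agrees with some `τ z` on each
coset, since cosets are finite; gluing these `z` coset by coset gives a preimage of `x`.
-/

theorem exists_mem_eqOn_of_mem_closure {ι A : Type*} [TopologicalSpace A] [DiscreteTopology A]
    {S : Set (ι → A)} {x : ι → A} (hx : x ∈ closure S) {C : Set ι} (hC : C.Finite) :
    ∃ y ∈ S, Set.EqOn y x C := by
  have hU : IsOpen (C.pi fun i => {x i}) := isOpen_set_pi hC fun _ _ => isOpen_discrete _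
  obtain ⟨y, hyU, hyS⟩ := mem_closure_iff.mp hx _ hU fun i _ => rfl
  exact ⟨y, hyS, hyU⟩

theorem QuotientGroup.finite_preimage_mk_singleton {G : Type*} [Group G] (H : Subgroup G)
    [Finite H] (q : G ⧸ H) : (QuotientGroup.mk ⁻¹' {q} : Set G).Finite :=
  have := Finite.of_equiv _ (QuotientGroup.preimageMkEquivSubgroupProdSet H {q}).symm
  Set.toFinite _

namespace IsCellularAutomaton

variable {G A : Type*} [Group G] {τ : (G → A) → (G → A)}

theorem exists_finset_apply_eq_of_eqOn (hτ : IsCellularAutomaton τ) :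
    ∃ M : Finset G, ∀ (x y : G → A) (g : G),
      (∀ m ∈ M, x (g * m) = y (g * m)) → τ x g = τ y g := by
  obtain ⟨M, μ, hμ⟩ := hτ
  refine ⟨M, fun x y g hxy => ?_⟩
  rw [hμ, hμ]
  exact congrArg μ (funext fun m => hxy m m.2)

end IsCellularAutomaton

theorem mem_range_of_forall_coset {G A : Type*} [Group G] {τ : (G → A) → (G → A)}
    {H : Subgroup G}
    (hτ : ∀ (x y : G → A) (g : G), (∀ h ∈ H, x (g * h) = y (g * h)) → τ x g = τ y g)
    {x : G → A} (hx : ∀ q : G ⧸ H, ∃ z : G → A, ∀ g : G, (g : G ⧸ H) = q → τ z g = x g) :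
    x ∈ Set.range τ := by
  choose w hw using hx
  refine ⟨fun g => w g g, funext fun g => ?_⟩
  calc τ (fun g' => w g' g') g = τ (w g) g :=
        hτ _ _ g fun h hh => by rw [QuotientGroup.mk_mul_of_mem g hh]
    _ = x g := hw g g rfl

theorem ca_closed_image_of_locally_finite
    {G : Type*} [Group G]
    (hLF : ∀ S : Finset G, Finite (Subgroup.closure (S : Set G)))
    {A : Type*} (τ : (G → A) → (G → A)) (hca : IsCellularAutomaton τ) :
    @IsClosed _ (prodiscrete G A) (Set.range τ) := by
  let : TopologicalSpace A := ⊥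
  have : DiscreteTopology A := ⟨rfl⟩
  show IsClosed (Set.range τ)
  obtain ⟨M, hM⟩ := hca.exists_finset_apply_eq_of_eqOn
  let H := Subgroup.closure (M : Set G)
  have : Finite H := hLF M
  have hτ : ∀ (x y : G → A) (g : G), (∀ h ∈ H, x (g * h) = y (g * h)) → τ x g = τ y g :=
    fun x y g hxy => hM x y g fun m hm => hxy m (Subgroup.subset_closure hm)
  refine closure_subset_iff_isClosed.mp fun x hx =>
    mem_range_of_forall_coset hτ fun q => ?_
  obtain ⟨_, ⟨z, rfl⟩, hz⟩ :=
    exists_mem_eqOn_of_mem_closure hx (QuotientGroup.finite_preimage_mk_singleton H q)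
  exact ⟨z, fun g hg => hz hg⟩
end

section
/- Let $G$ be a locally finite group and $A$ any set. Then every bijective cellular automaton $\tau \colon A^G \to A^G$ is reversible, i.e., $\tau^{-1}$ is also a cellular automaton. -/
theorem bijective_ca_reversible_of_locally_finite
    {G : Type*} [Group G]
    (hLF : ∀ S : Finset G, Finite (Subgroup.closure (S : Set G)))
    {A : Type*} (τ : (G → A) → (G → A)) (hca : IsCellularAutomaton τ)
    (hbij : Function.Bijective τ) :
    ∃ σ : (G → A) → (G → A), Function.LeftInverse σ τ ∧
      Function.RightInverse σ τ ∧ IsCellularAutomaton σ := by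
  rcases isEmpty_or_nonempty A with hA | hA
  · exact ⟨τ, fun x => (hA.false (x 1)).elim, fun x => (hA.false (x 1)).elim, hca⟩
  obtain ⟨d⟩ := hA
  classical
  obtain ⟨M, μ, hμ⟩ := hca
  set H := Subgroup.closure (M : Set G) with hH
  haveI : Finite H := hLF M
  have hMH : ∀ m : M, (m : G) ∈ H := fun m => Subgroup.subset_closure m.2
  -- the restricted automaton on H
  set τH : (H → A) → (H → A) :=
    fun y h => μ (fun m => y (h * ⟨m.val, hMH m⟩)) with hτH
  -- fact 1: equivariance / coset decomposition
  have fact1 : ∀ (x : G → A) (g : G),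
      τH (fun h => x (g * h.val)) = fun h : H => τ x (g * h.val) := by
    intro x g
    funext h
    rw [hτH]
    simp only
    rw [hμ]
    congr 1
    funext m
    simp [mul_assoc]
  -- extension of configurations on H to G
  set ext : (H → A) → (G → A) :=
    fun y g => if hg : g ∈ H then y ⟨g, hg⟩ else d with hext
  have hext_mem : ∀ (y : H → A) (h : H), ext y h.val = y h := by
    intro y h
    simp [hext, h.2]
  -- injectivity of τH
  have hinj : Function.Injective τH := by
    intro y y' hyy'
    have key : τ (ext y) = τ (ext y') := by
      funext g
      by_cases hg : g ∈ H
      · have e1 : ∀ z : H → A, τ (ext z) g = τH z ⟨g, hg⟩ := by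
          intro z
          rw [hμ, hτH]
          congr 1
          funext m
          have hgm : g * m.val ∈ H := H.mul_mem hg (hMH m)
          simp [hext, hgm]
        rw [e1 y, e1 y', hyy']
      · rw [hμ (ext y) g, hμ (ext y') g]
        congr 1
        funext m
        have hgm : g * m.val ∉ H := by
          intro hmem
          exact hg (by simpa using H.mul_mem hmem (H.inv_mem (hMH m)))
        simp [hext, hgm]
    have := hbij.1 key
    funext h
    rw [← hext_mem y h, ← hext_mem y' h, this]
  -- surjectivity of τH
  have hsurj : Function.Surjective τH := by
    intro z
    obtain ⟨x, hx⟩ := hbij.2 (ext z)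
    refine ⟨fun h => x h.val, ?_⟩
    have := fact1 x 1
    simp only [one_mul] at this
    rw [this]
    funext h
    rw [hx, hext_mem]
  set e : (H → A) ≃ (H → A) := Equiv.ofBijective τH ⟨hinj, hsurj⟩ with he
  set σ : (G → A) → (G → A) := fun x g => e.symm (fun h => x (g * h.val)) 1 with hσ
  have hleft : Function.LeftInverse σ τ := by
    intro x
    funext g
    have h1 : (fun h : H => τ x (g * h.val)) = e (fun h : H => x (g * h.val)) :=
      (fact1 x g).symm
    rw [hσ]
    simp only
    rw [h1, Equiv.symm_apply_apply]
    simp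
  refine ⟨σ, hleft, ?_, ?_⟩
  · intro x
    obtain ⟨y, rfl⟩ := hbij.2 x
    rw [hleft y]
  · refine ⟨Set.Finite.toFinset (Set.toFinite (H : Set G)),
      fun f => e.symm (fun h : H => f ⟨h.val, (Set.Finite.mem_toFinset _).mpr h.2⟩) 1, ?_⟩
    intro x g
    rfl
end
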